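/- For the piecewise-linear functions β(x) = 61x/100 and β̃(x) defined on [0,1] by β̃(x) = x for 0 ≤ x ≤ 1/3, β̃(x) = x/10 + 3/10 for 1/3 < x ≤ 2/3, and β̃(x) = 63x/100 − 4/75 for 2/3 < x ≤ 1, the integral ∫₀¹ (β̃(x) − β(x))·((x − β(x))/β'(x) − x) dx is strictly negative, while ∫₀¹ (β̃(x) − β(x))·((x − β̃(x))/β̃'(x) − x) dx is strictly positive (derivatives taken piecewise, almost everywhere). -/

import Mathlib

/-!
Both integrands are piecewise quadratic polynomials on the three pieces `[0, 1/3]`, `[1/3, 2/3]`,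
`[2/3, 1]` of `β̃`, so both integrals are explicit rational numbers: the first is `-11/49410`
and the second `751/1020600`.
-/

open MeasureTheory Set

noncomputable def fp_beta (x : ℝ) : ℝ := 61 * x / 100

noncomputable def fp_betat (x : ℝ) : ℝ :=
  if x ≤ 1/3 then x
  else if x ≤ 2/3 then x / 10 + 3 / 10
  else 63 * x / 100 - 4 / 75

noncomputable def fp_betat' (x : ℝ) : ℝ :=
  if x ≤ 1/3 then 1
  else if x ≤ 2/3 then 1 / 10
  else 63 / 100

lemma intervalIntegrable_quadratic (a b c₀ c₁ c₂ : ℝ) :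
    IntervalIntegrable (fun x => c₀ + c₁ * x + c₂ * x ^ 2) volume a b :=
  (by fun_prop : Continuous fun x : ℝ => c₀ + c₁ * x + c₂ * x ^ 2).intervalIntegrable a b

lemma integral_quadratic (a b c₀ c₁ c₂ : ℝ) :
    ∫ x in a..b, (c₀ + c₁ * x + c₂ * x ^ 2) =
      (c₀ * b + c₁ * b ^ 2 / 2 + c₂ * b ^ 3 / 3) -
        (c₀ * a + c₁ * a ^ 2 / 2 + c₂ * a ^ 3 / 3) := by
  refine intervalIntegral.integral_eq_sub_of_hasDerivAt
    (f := fun t => c₀ * t + c₁ * t ^ 2 / 2 + c₂ * t ^ 3 / 3) (fun x _ => ?_)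
    (intervalIntegrable_quadratic a b c₀ c₁ c₂)
  refine ((((hasDerivAt_id x).const_mul c₀).add
    (((hasDerivAt_pow 2 x).const_mul c₁).div_const 2)).add
    (((hasDerivAt_pow 3 x).const_mul c₂).div_const 3)).congr_deriv ?_
  ring

lemma intervalIntegrable_and_integral_eq_of_eqOn_Ioo {f g : ℝ → ℝ} {a b : ℝ} (hab : a ≤ b)
    (hg : IntervalIntegrable g volume a b) (h : EqOn f g (Ioo a b)) :
    IntervalIntegrable f volume a b ∧ ∫ x in a..b, f x = ∫ x in a..b, g x := by
  have h' : EqOn g f (uIoo a b) := uIoo_of_le hab ▸ h.symm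
  exact ⟨hg.congr_uIoo h', intervalIntegral.integral_congr_Ioo_of_le hab h⟩

lemma integral_eq_add_add_of_eqOn_Ioo {f g₁ g₂ g₃ : ℝ → ℝ} {a b c d : ℝ}
    (hab : a ≤ b) (hbc : b ≤ c) (hcd : c ≤ d) (hg₁ : IntervalIntegrable g₁ volume a b)
    (hg₂ : IntervalIntegrable g₂ volume b c) (hg₃ : IntervalIntegrable g₃ volume c d)
    (h₁ : EqOn f g₁ (Ioo a b)) (h₂ : EqOn f g₂ (Ioo b c)) (h₃ : EqOn f g₃ (Ioo c d)) :
    ∫ x in a..d, f x =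
      (∫ x in a..b, g₁ x) + (∫ x in b..c, g₂ x) + ∫ x in c..d, g₃ x := by
  obtain ⟨hf₁, e₁⟩ := intervalIntegrable_and_integral_eq_of_eqOn_Ioo hab hg₁ h₁
  obtain ⟨hf₂, e₂⟩ := intervalIntegrable_and_integral_eq_of_eqOn_Ioo hbc hg₂ h₂
  obtain ⟨hf₃, e₃⟩ := intervalIntegrable_and_integral_eq_of_eqOn_Ioo hcd hg₃ h₃
  rw [← e₁, ← e₂, ← e₃, intervalIntegral.integral_add_adjacent_intervals hf₁ hf₂,
    intervalIntegral.integral_add_adjacent_intervals (hf₁.trans hf₂) hf₃]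

lemma fp_betat_of_le {x : ℝ} (hx : x ≤ 1/3) : fp_betat x = x ∧ fp_betat' x = 1 := by
  simp only [fp_betat, fp_betat', if_pos hx, and_self]

lemma fp_betat_of_mem_Ioc {x : ℝ} (hx : x ∈ Ioc (1/3) (2/3)) :
    fp_betat x = x / 10 + 3 / 10 ∧ fp_betat' x = 1 / 10 := by
  simp only [fp_betat, fp_betat', if_neg (not_le.mpr hx.1), if_pos hx.2, and_self]

lemma fp_betat_of_lt {x : ℝ} (hx : 2/3 < x) :
    fp_betat x = 63 * x / 100 - 4 / 75 ∧ fp_betat' x = 63 / 100 := by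
  have hx' : ¬ x ≤ 1/3 := by linarith
  simp only [fp_betat, fp_betat', if_neg hx', if_neg (not_le.mpr hx), and_self]

lemma integral_gradient_at_fp_beta :
    ∫ x in (0:ℝ)..1, (fp_betat x - fp_beta x) * ((x - fp_beta x) / (61 / 100) - x) =
      -11 / 49410 := by
  rw [integral_eq_add_add_of_eqOn_Ioo (by norm_num) (by norm_num) (by norm_num)
    (intervalIntegrable_quadratic 0 (1 / 3) 0 0 (-429 / 3050))
    (intervalIntegrable_quadratic (1 / 3) (2 / 3) 0 (-33 / 305) (561 / 3050))
    (intervalIntegrable_quadratic (2 / 3) 1 0 (88 / 4575) (-11 / 1525))]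
  · simp only [integral_quadratic]
    norm_num
  all_goals intro x hx
  · simp only [fp_betat_of_le hx.2.le, fp_beta]
    ring
  · simp only [fp_betat_of_mem_Ioc (Ioo_subset_Ioc_self hx), fp_beta]
    ring
  · simp only [fp_betat_of_lt hx.1, fp_beta]
    ring

lemma integral_gradient_at_fp_betat :
    ∫ x in (0:ℝ)..1, (fp_betat x - fp_beta x) * ((x - fp_betat x) / fp_betat' x - x) =
      751 / 1020600 := by
  rw [integral_eq_add_add_of_eqOn_Ioo (by norm_num) (by norm_num) (by norm_num)
    (intervalIntegrable_quadratic 0 (1 / 3) 0 0 (-39 / 100))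
    (intervalIntegrable_quadratic (1 / 3) (2 / 3) (-9 / 10) (393 / 100) (-102 / 25))
    (intervalIntegrable_quadratic (2 / 3) 1 (-64 / 14175) (16 / 675) (-13 / 1575))]
  · simp only [integral_quadratic]
    norm_num
  all_goals intro x hx
  · simp only [fp_betat_of_le hx.2.le, fp_beta]
    ring
  · simp only [fp_betat_of_mem_Ioc (Ioo_subset_Ioc_self hx), fp_beta]
    ring
  · simp only [fp_betat_of_lt hx.1, fp_beta]
    ring

theorem first_price_not_quasimonotone :
    (∫ x in (0:ℝ)..1, (fp_betat x - fp_beta x) * ((x - fp_beta x) / (61 / 100) - x)) < 0 ∧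
    0 < ∫ x in (0:ℝ)..1, (fp_betat x - fp_beta x) * ((x - fp_betat x) / fp_betat' x - x) := by
  rw [integral_gradient_at_fp_beta, integral_gradient_at_fp_betat]
  norm_num
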